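/- Fix a universal self-delimiting Turing machine U. There exists a real α ∈ (0,1), with binary digit sequence x, such that for every pair of computable reals r, t > 1 and every integer c ≥ 1 there exists a constant b ≥ 0 with H_U(x_0 ⋯ x_{m−1}) ≥ m/r + (c/t)·log₂ m − b for all m ≥ 1. -/

import Mathlib

open scoped ENNReal

/-- The domain of a Turing machine (a partial function on binary strings). -/
def dom (f : List Bool →. List Bool) : Set (List Bool) := {p | (f p).Dom}

/-- A machine is self-delimiting if its domain is prefix-free. -/
def SelfDelim (f : List Bool →. List Bool) : Prop :=
  ∀ p ∈ dom f, ∀ q ∈ dom f, p <+: q → p = q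

/-- Chaitin's Omega number of a machine, in `[0,∞]`. -/
noncomputable def Omega (f : List Bool →. List Bool) : ℝ≥0∞ :=
  ∑' p : dom f, (2 : ℝ≥0∞)⁻¹ ^ (p : List Bool).length

/-- `bin n` is the binary expansion of `n` with the leading 1 removed. -/
def bin (n : ℕ) : List Bool := (Nat.bits n).reverse.tail

/-- `Υ[A]`: the set of positive integers whose `bin`-code lies in `A`. -/
def Ups (A : Set (List Bool)) : Set ℕ := {n | 1 ≤ n ∧ bin n ∈ A}

/-- The zeta number of a machine, in `[0,∞]`. -/
noncomputable def zeta (f : List Bool →. List Bool) : ℝ≥0∞ :=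
  ∑' n : Ups (dom f), ((n : ℕ) : ℝ≥0∞)⁻¹

/-- `U` is a universal self-delimiting Turing machine. -/
def UnivSD (U : List Bool →. List Bool) : Prop :=
  SelfDelim U ∧ ∀ C : List Bool →. List Bool, Partrec C → SelfDelim C →
    ∃ c : ℕ, ∀ x ∈ dom C, ∃ p : List Bool, p.length ≤ x.length + c ∧ U p = C x

/-- `T` is a universal (plain) Turing machine. -/
def UnivTM (T : List Bool →. List Bool) : Prop :=
  ∀ C : List Bool →. List Bool, Partrec C →
    ∃ c : ℕ, ∀ x ∈ dom C, ∃ p : List Bool, p.length ≤ x.length + c ∧ T p = C x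

/-- Program-size / plain complexity of a string w.r.t. a machine. -/
noncomputable def Cpx (f : List Bool →. List Bool) (y : List Bool) : ℕ :=
  sInf {n : ℕ | ∃ w : List Bool, w.length = n ∧ y ∈ f w}

/-- Natural complexity of a string w.r.t. a machine, with `min ∅ = ∞`. -/
noncomputable def nabla (f : List Bool →. List Bool) (y : List Bool) : ℝ≥0∞ :=
  sInf {c : ℝ≥0∞ | ∃ n : ℕ, 1 ≤ n ∧ y ∈ f (bin n) ∧ c = (n : ℝ≥0∞)}

/-- The real number with binary digit sequence `x`. -/
noncomputable def realDigits (x : ℕ → Bool) : ℝ :=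
  ∑' i : ℕ, (if x i then (1 : ℝ) else 0) * (2 : ℝ)⁻¹ ^ (i + 1)

/-- The extended nonnegative real with binary digit sequence `x`. -/
noncomputable def ennDigits (x : ℕ → Bool) : ℝ≥0∞ :=
  ∑' i : ℕ, (if x i then (1 : ℝ≥0∞) else 0) * (2 : ℝ≥0∞)⁻¹ ^ (i + 1)

/-- The string of the first `m` digits of the sequence `x`. -/
def prefixStr (x : ℕ → Bool) (m : ℕ) : List Bool := (List.range m).map x

/-- A real is computable if it is approximated to within `2⁻ⁿ` by a computable
sequence of rationals. -/
def ComputableReal (s : ℝ) : Prop :=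
  ∃ f : ℕ → ℚ, Computable f ∧ ∀ n : ℕ, |s - (f n : ℝ)| ≤ (2 : ℝ)⁻¹ ^ n

/-! The strings that `U` compresses (some shorter program outputs them) have total weight
`∑ 2^{-|y|} ≤ Ω_U / 2 ≤ 1/2`, by Kraft's inequality for the prefix-free domain of `U`, and the two
constant strings of length 3 add `1/4`. A set of strings of total weight below `1` misses some
infinite branch of the binary tree, so some non-constant sequence `x` has no compressible prefix,
i.e. `H_U(x[m]) ≥ m`, and `m` dominates `m/r + (c/t)·log₂ m − b` for a suitable `b`. -/

def PrefixFree {α : Type*} (S : Set (List α)) : Prop :=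
  ∀ p ∈ S, ∀ q ∈ S, p <+: q → p = q

namespace PrefixFree

variable {α : Type*}

theorem uniquelyDecodable {S : Set (List α)} (hS : PrefixFree S) (hnil : [] ∉ S) :
    InformationTheory.UniquelyDecodable S := by
  intro L₁ L₂ h₁ h₂ hflat
  induction L₁ generalizing L₂ with
  | nil =>
    cases L₂ with
    | nil => rfl
    | cons v L₂ =>
      have hv : v = [] := List.flatten_eq_nil_iff.1 hflat.symm v (by simp)
      exact absurd (hv ▸ h₂ v (by simp)) hnil
  | cons w L₁ ih =>
    cases L₂ with
    | nil =>
      have hw : w = [] := List.flatten_eq_nil_iff.1 hflat w (by simp)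
      exact absurd (hw ▸ h₁ w (by simp)) hnil
    | cons v L₂ =>
      rw [List.flatten_cons, List.flatten_cons] at hflat
      have hw := h₁ w (by simp)
      have hv := h₂ v (by simp)
      obtain rfl : w = v := by
        rcases List.prefix_or_prefix_of_prefix (List.prefix_append w _)
            (hflat ▸ List.prefix_append v _) with h | h
        · exact hS w hw v hv h
        · exact (hS v hv w hw h).symm
      rw [ih L₂ (fun u hu => h₁ u (List.mem_cons_of_mem _ hu))
        (fun u hu => h₂ u (List.mem_cons_of_mem _ hu)) (List.append_cancel_left hflat)]

theorem sum_le_one [Fintype α] [Nonempty α] {S : Finset (List α)}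
    (hS : PrefixFree (S : Set (List α))) :
    ∑ w ∈ S, (1 / Fintype.card α : ℝ) ^ w.length ≤ 1 := by
  by_cases hnil : [] ∈ S
  · have hsub : S ⊆ {[]} := fun q hq =>
      Finset.mem_singleton.2 (hS _ hnil q hq List.nil_prefix).symm
    calc _ ≤ ∑ w ∈ {[]}, (1 / Fintype.card α : ℝ) ^ w.length :=
          Finset.sum_le_sum_of_subset_of_nonneg hsub (fun _ _ _ => by positivity)
      _ = 1 := by simp
  · exact InformationTheory.kraft_mcmillan_inequality (hS.uniquelyDecodable hnil)

end PrefixFree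

theorem Omega_le_one {f : List Bool →. List Bool} (hf : SelfDelim f) : Omega f ≤ 1 := by
  rw [Omega, ENNReal.tsum_eq_iSup_sum]
  refine iSup_le fun G => ?_
  have hkraft := PrefixFree.sum_le_one (S := G.map (Function.Embedding.subtype _)) (by
    intro p hp q hq
    simp only [Finset.coe_map, Set.mem_image, Finset.mem_coe] at hp hq
    obtain ⟨p, -, rfl⟩ := hp
    obtain ⟨q, -, rfl⟩ := hq
    exact hf p p.2 q q.2)
  rw [Finset.sum_map] at hkraft
  calc ∑ p ∈ G, (2 : ℝ≥0∞)⁻¹ ^ (p : List Bool).length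
      = ENNReal.ofReal (∑ p ∈ G, (1 / Fintype.card Bool : ℝ) ^ (p : List Bool).length) := by
        rw [ENNReal.ofReal_sum_of_nonneg (fun _ _ => by positivity)]
        simp [ENNReal.ofReal_pow, ENNReal.ofReal_inv_of_pos, ENNReal.inv_pow]
    _ ≤ 1 := ENNReal.ofReal_le_one.2 hkraft

def Compressible (f : List Bool →. List Bool) (y : List Bool) : Prop :=
  ∃ p : List Bool, p.length < y.length ∧ y ∈ f p

theorem tsum_compressible_le (f : List Bool →. List Bool) :
    ∑' y : {y | Compressible f y}, (2 : ℝ≥0∞)⁻¹ ^ (y : List Bool).length ≤ 2⁻¹ * Omega f := by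
  choose p hp using fun y : {y | Compressible f y} => y.2
  let program : {y | Compressible f y} → dom f :=
    fun y => ⟨p y, Part.dom_iff_mem.2 ⟨_, (hp y).2⟩⟩
  have hinj : Function.Injective program := fun y z hyz => by
    have hpyz : p y = p z := congrArg Subtype.val hyz
    exact Subtype.ext <| Part.mem_unique (hp y).2 (hpyz ▸ (hp z).2)
  calc ∑' y : {y | Compressible f y}, (2 : ℝ≥0∞)⁻¹ ^ (y : List Bool).length
      ≤ ∑' y, 2⁻¹ * 2⁻¹ ^ (program y : List Bool).length :=
        ENNReal.tsum_le_tsum fun y => by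
          rw [← pow_succ']
          exact pow_le_pow_right_of_le_one' (by norm_num) (hp y).1
    _ ≤ ∑' q : dom f, 2⁻¹ * 2⁻¹ ^ (q : List Bool).length :=
        ENNReal.tsum_comp_le_tsum_of_injective hinj (fun q => 2⁻¹ * 2⁻¹ ^ (q : List Bool).length)
    _ = 2⁻¹ * Omega f := ENNReal.tsum_mul_left

theorem prefixStr_succ (x : ℕ → Bool) (m : ℕ) : prefixStr x (m + 1) = prefixStr x m ++ [x m] := by
  simp [prefixStr, List.range_succ]

theorem length_prefixStr (x : ℕ → Bool) (m : ℕ) : (prefixStr x m).length = m := by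
  simp [prefixStr]

theorem exists_forall_prefixStr {P : List Bool → Prop} (h0 : P [])
    (hstep : ∀ s, P s → ∃ b, P (s ++ [b])) : ∃ x : ℕ → Bool, ∀ m, P (prefixStr x m) := by
  choose next hnext using fun s : {s // P s} => hstep s.1 s.2
  let grow : {s // P s} → {s // P s} := fun s => ⟨s.1 ++ [next s], hnext s⟩
  let branch : ℕ → {s // P s} := fun n => grow^[n] ⟨[], h0⟩
  refine ⟨fun n => next (branch n), fun m => ?_⟩
  suffices prefixStr (fun n => next (branch n)) m = (branch m).1 from this ▸ (branch m).2
  induction m with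
  | zero => rfl
  | succ m ih =>
    rw [prefixStr_succ, ih]
    exact congrArg Subtype.val (Function.iterate_succ_apply' grow m _).symm

section ExtensionWeight

variable (F : Set (List Bool))

noncomputable def extensionWeight (s : List Bool) : ℝ≥0∞ :=
  ∑' y, {y ∈ F | s <+: y}.indicator (fun y => (2 : ℝ≥0∞)⁻¹ ^ y.length) y

theorem extensionWeight_nil :
    extensionWeight F [] = ∑' y : F, (2 : ℝ≥0∞)⁻¹ ^ (y : List Bool).length := by
  rw [tsum_subtype F (fun y => (2 : ℝ≥0∞)⁻¹ ^ y.length)]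
  simp [extensionWeight]

theorem extensionWeight_append_add_le (s : List Bool) :
    extensionWeight F (s ++ [false]) + extensionWeight F (s ++ [true]) ≤ extensionWeight F s := by
  have hdisj : Disjoint {y ∈ F | s ++ [false] <+: y} {y ∈ F | s ++ [true] <+: y} :=
    Set.disjoint_left.2 fun y h₀ h₁ => by
      simpa using List.prefix_of_prefix_length_le h₀.2 h₁.2 (by simp)
  have hsub : {y ∈ F | s ++ [false] <+: y} ∪ {y ∈ F | s ++ [true] <+: y} ⊆ {y ∈ F | s <+: y} := by
    rintro y (⟨hy, h⟩ | ⟨hy, h⟩) <;> exact ⟨hy, (List.prefix_append _ _).trans h⟩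
  rw [extensionWeight, extensionWeight, ← ENNReal.tsum_add]
  refine ENNReal.tsum_le_tsum fun y => ?_
  rw [← congrFun (Set.indicator_union_of_disjoint hdisj (fun y => (2 : ℝ≥0∞)⁻¹ ^ y.length)) y]
  exact Set.indicator_le_indicator_of_subset hsub (fun _ => zero_le) y

variable {F}

theorem pow_length_le_extensionWeight {s : List Bool} (hs : s ∈ F) :
    (2 : ℝ≥0∞)⁻¹ ^ s.length ≤ extensionWeight F s :=
  calc (2 : ℝ≥0∞)⁻¹ ^ s.length
      = {y ∈ F | s <+: y}.indicator (fun y => (2 : ℝ≥0∞)⁻¹ ^ y.length) s := by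
        rw [Set.indicator_of_mem]
        exact ⟨hs, List.prefix_refl s⟩
    _ ≤ extensionWeight F s := ENNReal.le_tsum s

theorem exists_extensionWeight_append_lt {s : List Bool}
    (hs : extensionWeight F s < 2⁻¹ ^ s.length) :
    ∃ b, extensionWeight F (s ++ [b]) < 2⁻¹ ^ (s ++ [b]).length := by
  by_contra! hb
  simp only [List.length_append, List.length_singleton] at hb
  refine hs.not_ge ?_
  calc (2 : ℝ≥0∞)⁻¹ ^ s.length = 2⁻¹ ^ (s.length + 1) + 2⁻¹ ^ (s.length + 1) := by
        rw [pow_succ, ← mul_add, ENNReal.inv_two_add_inv_two, mul_one]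
    _ ≤ extensionWeight F (s ++ [false]) + extensionWeight F (s ++ [true]) :=
        add_le_add (hb false) (hb true)
    _ ≤ extensionWeight F s := extensionWeight_append_add_le F s

/-- Follow the child in whose cylinder `F` still has weight below the cylinder's measure
`2^{-|s|}`; such a node cannot lie in `F`. -/
theorem exists_forall_prefixStr_notMem
    (hF : ∑' y : F, (2 : ℝ≥0∞)⁻¹ ^ (y : List Bool).length < 1) :
    ∃ x : ℕ → Bool, ∀ m, prefixStr x m ∉ F := by
  obtain ⟨x, hx⟩ := exists_forall_prefixStr (P := fun s => extensionWeight F s < 2⁻¹ ^ s.length)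
    (by simpa [extensionWeight_nil] using hF) (fun _ => exists_extensionWeight_append_lt)
  exact ⟨x, fun m hm => (hx m).not_ge (pow_length_le_extensionWeight hm)⟩

end ExtensionWeight

theorem exists_incompressible_nonconstant {U : List Bool →. List Bool} (hU : SelfDelim U) :
    ∃ x : ℕ → Bool, (∀ m, ¬ Compressible U (prefixStr x m)) ∧ ∀ b, ∃ i, x i ≠ b := by
  set constant : Set (List Bool) := Set.range fun b : Bool => List.replicate 3 b
  have hconst : ∑' y : constant, (2 : ℝ≥0∞)⁻¹ ^ (y : List Bool).length = 2 * 2⁻¹ ^ 3 := by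
    rw [tsum_range (fun y : List Bool => (2 : ℝ≥0∞)⁻¹ ^ y.length)
      (fun a b h => by simpa using congrArg List.head? h)]
    simp [tsum_fintype, two_mul]
  have hweight : ∑' y : ({y | Compressible U y} ∪ constant : Set (List Bool)),
      (2 : ℝ≥0∞)⁻¹ ^ (y : List Bool).length < 1 :=
    calc _ ≤ 2⁻¹ * Omega U + 2 * 2⁻¹ ^ 3 :=
          (ENNReal.tsum_union_le (fun y : List Bool => (2 : ℝ≥0∞)⁻¹ ^ y.length) _ _).trans
            (add_le_add (tsum_compressible_le U) hconst.le)
      _ ≤ 2⁻¹ * 1 + 2 * 2⁻¹ ^ 3 := by gcongr; exact Omega_le_one hU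
      _ < 1 := by
          rw [← ENNReal.toReal_lt_toReal (by finiteness) (by simp),
            ENNReal.toReal_add (by simp) (by finiteness)]
          norm_num
  obtain ⟨x, hx⟩ := exists_forall_prefixStr_notMem hweight
  refine ⟨x, fun m hm => hx m (Or.inl hm), fun b => ?_⟩
  by_contra! hb
  exact hx 3 (Or.inr ⟨b, by simp [prefixStr, List.range_succ, hb]⟩)

theorem summable_inv_two_pow_succ : Summable fun i : ℕ => (2 : ℝ)⁻¹ ^ (i + 1) :=
  (summable_nat_add_iff 1).2 (summable_geometric_of_lt_one (by norm_num) (by norm_num))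

theorem tsum_inv_two_pow_succ : ∑' i : ℕ, (2 : ℝ)⁻¹ ^ (i + 1) = 1 := by
  simp_rw [pow_succ]
  rw [tsum_mul_right, tsum_geometric_inv_two]
  norm_num

theorem summable_realDigits (x : ℕ → Bool) :
    Summable fun i => (if x i then (1 : ℝ) else 0) * (2 : ℝ)⁻¹ ^ (i + 1) :=
  summable_inv_two_pow_succ.of_nonneg_of_le (fun _ => by positivity)
    (fun i => by cases x i <;> simp)

theorem realDigits_pos {x : ℕ → Bool} (h : ∃ i, x i = true) : 0 < realDigits x := by
  obtain ⟨i, hi⟩ := h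
  exact (summable_realDigits x).tsum_pos (fun _ => by positivity) i (by simp [hi])

theorem realDigits_lt_one {x : ℕ → Bool} (h : ∃ j, x j = false) : realDigits x < 1 := by
  obtain ⟨j, hj⟩ := h
  calc realDigits x < ∑' i : ℕ, (2 : ℝ)⁻¹ ^ (i + 1) :=
        (summable_realDigits x).tsum_lt_tsum (i := j) (fun i => by cases x i <;> simp)
          (by simp [hj]) summable_inv_two_pow_succ
    _ = 1 := tsum_inv_two_pow_succ

/-- Decodes `1ⁿ 0 y` with `|y| = n` to `y`; these code words form a prefix-free set. -/
def decodeLengthPrefixed (l : List Bool) : Option (List Bool) :=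
  if l.length = 2 * l.idxOf false + 1 then some (l.drop (l.idxOf false + 1)) else none

theorem primrec_decodeLengthPrefixed : Primrec decodeLengthPrefixed := by
  have hidx : Primrec fun l : List Bool => l.idxOf false :=
    Primrec.list_idxOf.comp (.const false) .id
  exact Primrec.ite
    (PrimrecRel.comp Primrec.eq Primrec.list_length
      (Primrec.succ.comp (Primrec.nat_mul.comp (.const 2) hidx)))
    (Primrec.option_some.comp (Primrec.list_drop.comp (Primrec.succ.comp hidx) .id))
    (.const none)

theorem decodeLengthPrefixed_replicate_append (y : List Bool) :
    decodeLengthPrefixed (List.replicate y.length true ++ false :: y) = some y := by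
  have hidx : (List.replicate y.length true ++ false :: y).idxOf false = y.length := by
    rw [List.idxOf_append_of_notMem (by simp)]
    simp
  rw [decodeLengthPrefixed, hidx, if_pos (by simp; ring), ← List.singleton_append,
    ← List.append_assoc, List.drop_left' (by simp)]

theorem length_eq_of_decodeLengthPrefixed_isSome {l : List Bool}
    (h : (decodeLengthPrefixed l).isSome) : l.length = 2 * l.idxOf false + 1 := by
  by_contra hl
  simp [decodeLengthPrefixed, hl] at h

theorem selfDelim_decodeLengthPrefixed :
    SelfDelim fun l => (decodeLengthPrefixed l : Part (List Bool)) := by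
  intro p hp q hq hpq
  have hp' := length_eq_of_decodeLengthPrefixed_isSome ((Part.ofOption_dom _).1 hp)
  have hq' := length_eq_of_decodeLengthPrefixed_isSome ((Part.ofOption_dom _).1 hq)
  have hfalse : false ∈ p := by
    by_contra hf
    rw [List.idxOf_eq_length_iff.2 hf] at hp'
    omega
  obtain ⟨r, rfl⟩ := hpq
  rw [List.idxOf_append_of_mem hfalse] at hq'
  simp only [List.length_append] at hq'
  rw [List.eq_nil_of_length_eq_zero (by omega : r.length = 0), List.append_nil]

theorem UnivSD.exists_mem {U : List Bool →. List Bool} (hU : UnivSD U) (y : List Bool) :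
    ∃ p, y ∈ U p := by
  obtain ⟨c, hc⟩ := hU.2 _ (Computable.ofOption primrec_decodeLengthPrefixed.to_comp)
    selfDelim_decodeLengthPrefixed
  have hy := decodeLengthPrefixed_replicate_append y
  obtain ⟨p, -, hp⟩ := hc (List.replicate y.length true ++ false :: y) (by simp [dom, hy])
  exact ⟨p, by simp [hp, hy]⟩

theorem length_le_Cpx {f : List Bool →. List Bool} {y : List Bool} (hy : ∃ p, y ∈ f p)
    (hc : ¬ Compressible f y) : y.length ≤ Cpx f y := by
  obtain ⟨p, hp⟩ := hy
  obtain ⟨w, hw, hyw⟩ := Nat.sInf_mem (s := {n | ∃ w : List Bool, w.length = n ∧ y ∈ f w})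
    ⟨_, p, rfl, hp⟩
  by_contra! hlt
  exact hc ⟨w, hw ▸ hlt, hyw⟩

/-- Uses `log x = log (εx/L) + log (L/ε) ≤ εx/L + log (L/ε)` with `L = |K| + 1`. -/
theorem exists_mul_log_le_add (K : ℝ) {ε : ℝ} (hε : 0 < ε) :
    ∃ b, 0 ≤ b ∧ ∀ x : ℝ, 1 ≤ x → K * Real.log x ≤ ε * x + b := by
  set L := |K| + 1
  have hL : 0 < L := by positivity
  refine ⟨L * |Real.log (L / ε)|, by positivity, fun x hx => ?_⟩
  have hlog : Real.log x = Real.log (ε * x / L) + Real.log (L / ε) := by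
    rw [← Real.log_mul (by positivity) (by positivity)]
    congr 1
    field_simp
  have hscaled : Real.log (ε * x / L) ≤ ε * x / L :=
    (Real.log_le_sub_one_of_pos (by positivity)).trans (by linarith)
  calc K * Real.log x ≤ L * Real.log x :=
        mul_le_mul_of_nonneg_right (by linarith [le_abs_self K]) (Real.log_nonneg hx)
    _ ≤ L * (ε * x / L + |Real.log (L / ε)|) := by
        rw [hlog]
        gcongr
        exact le_abs_self _
    _ = ε * x + L * |Real.log (L / ε)| := by field_simp

theorem stmt_17_general (U : List Bool →. List Bool) (hUuniv : UnivSD U) :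
    ∃ α : ℝ, 0 < α ∧ α < 1 ∧ ∃ x : ℕ → Bool, α = realDigits x ∧
      ∀ r t : ℝ, ComputableReal r → ComputableReal t → 1 < r → 1 < t →
        ∀ c : ℕ, 1 ≤ c →
          ∃ b : ℝ, 0 ≤ b ∧ ∀ m : ℕ, 1 ≤ m →
            (Cpx U (prefixStr x m) : ℝ) ≥
              m / r + ((c : ℝ) / t) * Real.logb 2 m - b := by
  obtain ⟨x, hincompressible, hnonconstant⟩ := exists_incompressible_nonconstant hUuniv.1
  have hCpx (m : ℕ) : (m : ℝ) ≤ Cpx U (prefixStr x m) := by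
    have := length_le_Cpx (hUuniv.exists_mem _) (hincompressible m)
    rw [length_prefixStr] at this
    exact_mod_cast this
  refine ⟨realDigits x, realDigits_pos (by simpa using hnonconstant false),
    realDigits_lt_one (by simpa using hnonconstant true), x, rfl, ?_⟩
  intro r t _ _ hr _ c _
  have hε : 0 < 1 - 1 / r := sub_pos.2 ((div_lt_one (by linarith)).2 hr)
  obtain ⟨b, hb, hlog⟩ := exists_mul_log_le_add ((c : ℝ) / t / Real.log 2) hε
  refine ⟨b, hb, fun m hm => ?_⟩
  have hlogm := hlog m (by exact_mod_cast hm)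
  rw [div_mul_eq_mul_div, mul_div_assoc, ← Real.logb] at hlogm
  have hmr : (m : ℝ) / r = m - (1 - 1 / r) * m := by ring
  linarith [hCpx m]

/-- There is a real `α ∈ (0,1)` such that for all computable `r, t > 1` and
every integer `c ≥ 1` there is `b ≥ 0` with
`H_U(α[m]) ≥ m/r + (c/t)·log₂ m − b` for all `m ≥ 1`. -/
theorem stmt_17 (U : List Bool →. List Bool) (hU : Partrec U) (hUuniv : UnivSD U) :
    ∃ α : ℝ, 0 < α ∧ α < 1 ∧ ∃ x : ℕ → Bool, α = realDigits x ∧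
      ∀ r t : ℝ, ComputableReal r → ComputableReal t → 1 < r → 1 < t →
        ∀ c : ℕ, 1 ≤ c →
          ∃ b : ℝ, 0 ≤ b ∧ ∀ m : ℕ, 1 ≤ m →
            (Cpx U (prefixStr x m) : ℝ) ≥
              m / r + ((c : ℝ) / t) * Real.logb 2 m - b :=
  stmt_17_general U hUuniv
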